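/- Let P be a finite graded poset of rank n+1 with minimum 0̂ and maximum 1̂ such that P ∖ {1̂} is simplicial, and let G be a group of automorphisms of P whose action is good. Then for every nonempty S ⊆ {1,…,n} with maximum element m, α_P(S) = a_m(S ∖ {m}) · α_P({m}), where a_m(T) is the number of chains in the Boolean lattice B_m whose elements have set of ranks equal to T. -/

import Mathlib

open scoped Classical

noncomputable section

/-! ### Permutation combinatorics -/

/-- The value `w(i)` (1-based, in `{1,…,n}`) of a permutation `w` of `{1,…,n}`,
realized as `Equiv.Perm (Fin n)`. -/
def permApp {n : ℕ} (w : Equiv.Perm (Fin n)) (i : ℕ) : ℕ :=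
  if h : i - 1 < n then (w ⟨i - 1, h⟩ : ℕ) + 1 else 0

/-- The descent set of a permutation, a subset of `{1,…,n-1}`. -/
def descentSet {n : ℕ} (w : Equiv.Perm (Fin n)) : Finset ℕ :=
  (Finset.Icc 1 (n - 1)).filter fun i => permApp w (i + 1) < permApp w i

/-- `numDescentSet m T` is the number of permutations in `𝔖_m` with descent set `T`. -/
def numDescentSet (m : ℕ) (T : Finset ℕ) : ℕ :=
  Nat.card {w : Equiv.Perm (Fin m) // descentSet w = T}

/-- The Coxeter length (number of inversions) of a permutation. -/
def invCount {n : ℕ} (w : Equiv.Perm (Fin n)) : ℕ :=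
  (Finset.univ.filter fun p : Fin n × Fin n => p.1 < p.2 ∧ w p.2 < w p.1).card

/-- For `S = {s_1 < s_2 < ⋯ < s_k} ⊆ {1,…,n-1}`, `sElt n S j = s_j`, with the
conventions `s_0 = 0` and `s_j = n` for `j > k`. -/
def sElt (n : ℕ) (S : Finset ℕ) (j : ℕ) : ℕ :=
  if j = 0 then 0 else if j ≤ S.card then (S.sort (· ≤ ·)).getD (j - 1) 0 else n

lemma sElt_of_gt (n : ℕ) (S : Finset ℕ) (j : ℕ) (h : S.card < j) : sElt n S j = n := by
  unfold sElt
  rw [if_neg (by omega), if_neg (by omega)]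

/-! ### Standard Young tableaux -/

/-- A standard Young tableau of shape `μ`: a filling of the cells of `μ` by the numbers
`1,…,μ.card`, each used once, strictly increasing along rows and columns
(the entry of a non-cell is `0`). -/
structure SYT (μ : YoungDiagram) where
  entry : ℕ → ℕ → ℕ
  entry_eq_zero : ∀ i j, (i, j) ∉ μ → entry i j = 0
  row_strict : ∀ i j1 j2, j1 < j2 → (i, j2) ∈ μ → entry i j1 < entry i j2
  col_strict : ∀ i1 i2 j, i1 < i2 → (i2, j) ∈ μ → entry i1 j < entry i2 j
  bijOn : Set.BijOn (fun p : ℕ × ℕ => entry p.1 p.2) ↑μ.cells ↑(Finset.Icc 1 μ.card)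

/-- The descent set of a standard Young tableau: those `k` such that `k+1` lies in a
strictly lower row than `k`. -/
def SYT.des {μ : YoungDiagram} (Q : SYT μ) : Finset ℕ :=
  (Finset.Icc 1 (μ.card - 1)).filter fun k =>
    ∃ p1 ∈ μ.cells, ∃ p2 ∈ μ.cells,
      Q.entry p1.1 p1.2 = k ∧ Q.entry p2.1 p2.2 = k + 1 ∧ p1.1 < p2.1

/-- `fSYTRow μ t` is the number of standard Young tableaux of shape `μ` whose first row
contains the numbers `1,…,t`. -/
def fSYTRow (μ : YoungDiagram) (t : ℕ) : ℕ :=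
  Nat.card {Q : SYT μ // ∀ k, 1 ≤ k → k ≤ t → ∃ j, (0, j) ∈ μ ∧ Q.entry 0 j = k}

/-! ### Irreducible characters of the symmetric group, via Jacobi–Trudi -/

/-- The number of functions `f : Fin n → Fin k` which are invariant under `g` and whose
fiber over `i` has `c i` elements.  For `c` a composition of `n`, the function
`g ↦ fixedYoungFns n k c g` is the character of the permutation representation of `𝔖_n`
on ordered set partitions of `{1,…,n}` of type `c`, i.e. of the representation induced
from the trivial representation of the corresponding Young subgroup. -/
def fixedYoungFns (n k : ℕ) (c : Fin k → ℤ) (g : Equiv.Perm (Fin n)) : ℕ :=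
  Nat.card {f : Fin n → Fin k //
    (∀ x, f (g x) = f x) ∧ ∀ i, ((Nat.card {x : Fin n // f x = i} : ℕ) : ℤ) = c i}

/-- The irreducible character `χ^μ` of `𝔖_n` associated to a partition `μ` of `n`
(encoded as a Young diagram with `n` cells), defined through the Jacobi–Trudi
determinantal formula `χ^μ = det (h_{μ_i - i + j})`. -/
def chi (n : ℕ) (μ : YoungDiagram) (g : Equiv.Perm (Fin n)) : ℤ :=
  ∑ σ : Equiv.Perm (Fin μ.rowLens.length),
    ((Equiv.Perm.sign σ : ℤˣ) : ℤ) *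
      (fixedYoungFns n μ.rowLens.length
        (fun i => ((μ.rowLen (i : ℕ) : ℕ) : ℤ) - ((i : ℕ) : ℤ) + ((σ i : ℕ) : ℤ)) g : ℤ)

/-! ### Posets, rank selection, maximal chains and characters -/

/-- The maximal chains of the subposet induced on a subset `A` of a poset. -/
def maxChainsIn {P : Type*} [Preorder P] (A : Set P) : Set (Set P) :=
  {C | C ⊆ A ∧ IsChain (· ≤ ·) C ∧
    ∀ D : Set P, D ⊆ A → IsChain (· ≤ ·) D → C ⊆ D → C = D}

/-- The rank-selected subposet `P_S = {x ∈ P : rk x ∈ S} ∪ {⊥, ⊤}`. -/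
def rankSel {P : Type*} [Preorder P] [OrderBot P] [OrderTop P] (rk : P → ℕ)
    (S : Finset ℕ) : Set P :=
  {x | rk x ∈ S} ∪ {⊥, ⊤}

/-- `a_P(S)`: the number of maximal chains of the rank-selected subposet `P_S`. -/
def chainCount {P : Type*} [Preorder P] [OrderBot P] [OrderTop P] (rk : P → ℕ)
    (S : Finset ℕ) : ℕ :=
  Set.ncard (maxChainsIn (rankSel rk S))

/-- `b_P(S) = Σ_{T ⊆ S} (-1)^{|S-T|} a_P(T)`. -/
def bDim {P : Type*} [Preorder P] [OrderBot P] [OrderTop P] (rk : P → ℕ)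
    (S : Finset ℕ) : ℤ :=
  ∑ T ∈ S.powerset, (-1 : ℤ) ^ (S.card - T.card) * (chainCount rk T : ℤ)

/-- The character of the permutation representation `α_P(S)` of a group `G` acting (via
`act`) on the maximal chains of the rank-selected subposet `P_S`: its value at `g` is
the number of maximal chains of `P_S` fixed by `g`. -/
def gAlpha {P G : Type*} [Preorder P] [OrderBot P] [OrderTop P] (rk : P → ℕ)
    (act : G → P → P) (S : Finset ℕ) (g : G) : ℤ :=
  (Set.ncard {C : Set P | C ∈ maxChainsIn (rankSel rk S) ∧ act g '' C = C} : ℤ)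

/-- The character of the virtual representation
`β_P(S) = Σ_{T ⊆ S} (-1)^{|S-T|} α_P(T)`. -/
def gBeta {P G : Type*} [Preorder P] [OrderBot P] [OrderTop P] (rk : P → ℕ)
    (act : G → P → P) (S : Finset ℕ) (g : G) : ℤ :=
  ∑ T ∈ S.powerset, (-1 : ℤ) ^ (S.card - T.card) * gAlpha rk act T g

/-! ### The poset of injective words -/

/-- An injective word over the alphabet `{1,…,n}`. -/
def InjWord (n : ℕ) : Type := {l : List (Fin n) // l.Nodup}

instance (n : ℕ) : PartialOrder (InjWord n) where
  le u v := u.1.Sublist v.1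
  le_refl u := List.Sublist.refl _
  le_trans u v w h1 h2 := List.Sublist.trans h1 h2
  le_antisymm u v h1 h2 := Subtype.ext (List.Sublist.antisymm h1 h2)

instance (n : ℕ) : OrderBot (InjWord n) where
  bot := ⟨[], List.nodup_nil⟩
  bot_le u := List.nil_sublist u.1

/-- The rank function of the poset of injective words (with a maximum adjoined):
the rank of a word is its length, and the rank of `⊤` is `n+1`. -/
def rkInj (n : ℕ) (x : WithTop (InjWord n)) : ℕ :=
  WithTop.recTopCoe (n + 1) (fun u => u.1.length) x

/-- The action of `𝔖_n` on injective words, letter by letter. -/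
def permWord {n : ℕ} (w : Equiv.Perm (Fin n)) (u : InjWord n) : InjWord n :=
  ⟨u.1.map w, u.2.map w.injective⟩

/-- The character of `α_{P_n}(S)` for the `𝔖_n`-action on the poset of injective words. -/
def injAlpha (n : ℕ) (S : Finset ℕ) (g : Equiv.Perm (Fin n)) : ℤ :=
  gAlpha (rkInj n) (fun w : Equiv.Perm (Fin n) => WithTop.map (permWord w)) S g

/-- The character of `β_{P_n}(S)` for the `𝔖_n`-action on the poset of injective words. -/
def injBeta (n : ℕ) (S : Finset ℕ) (g : Equiv.Perm (Fin n)) : ℤ :=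
  gBeta (rkInj n) (fun w : Equiv.Perm (Fin n) => WithTop.map (permWord w)) S g

/-! ### The poset of r-colored injective words -/

/-- An `r`-colored injective word over `{1,…,n}`: a word in the alphabet
`{1,…,n} × ℤ_r` whose letters have pairwise distinct first coordinates. -/
def CInjWord (n r : ℕ) : Type := {l : List (Fin n × ZMod r) // (l.map Prod.fst).Nodup}

instance (n r : ℕ) : PartialOrder (CInjWord n r) where
  le u v := u.1.Sublist v.1
  le_refl u := List.Sublist.refl _
  le_trans u v w h1 h2 := List.Sublist.trans h1 h2
  le_antisymm u v h1 h2 := Subtype.ext (List.Sublist.antisymm h1 h2)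

instance (n r : ℕ) : OrderBot (CInjWord n r) where
  bot := ⟨[], by simp⟩
  bot_le u := List.nil_sublist u.1

/-- The rank function of the poset `P_{n,r}` of `r`-colored injective words
(with a maximum adjoined). -/
def rkC (n r : ℕ) (x : WithTop (CInjWord n r)) : ℕ :=
  WithTop.recTopCoe (n + 1) (fun u => u.1.length) x

/-- The action of `𝔖_n` on `r`-colored injective words: act on the first coordinate
of each letter, leaving colors unchanged. -/
def permCWord {n r : ℕ} (w : Equiv.Perm (Fin n)) (u : CInjWord n r) : CInjWord n r :=
  ⟨u.1.map (fun p => (w p.1, p.2)), by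
    have h := u.2.map w.injective
    rw [List.map_map] at h ⊢
    exact h⟩

/-- The character of `α_{P_{n,r}}(S)`. -/
def cAlpha (n r : ℕ) (S : Finset ℕ) (g : Equiv.Perm (Fin n)) : ℤ :=
  gAlpha (rkC n r) (fun w : Equiv.Perm (Fin n) => WithTop.map (permCWord w)) S g

/-- The character of `β_{P_{n,r}}(S)`. -/
def cBeta (n r : ℕ) (S : Finset ℕ) (g : Equiv.Perm (Fin n)) : ℤ :=
  gBeta (rkC n r) (fun w : Equiv.Perm (Fin n) => WithTop.map (permCWord w)) S g

/-- `b_{P_{n,r}}(S)`, the dimension of `β_{P_{n,r}}(S)`. -/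
def cChainDim (n r : ℕ) (S : Finset ℕ) : ℤ := bDim (rkC n r) S

/-! ### The statistics τ -/

/-- `τ(w,Q)` for a permutation `w` with descent set `S = {s_1 < ⋯ < s_k}` and a standard
Young tableau `Q`: the largest `i ∈ {0,…,k+1}` such that (a) `w(x) = w_S(x)` for
`x > s_{k+1-i}` and (b) no descent of `Q` is smaller than `n - s_{k+1-i}`. -/
def tau (n : ℕ) (S : Finset ℕ) (wS w : Equiv.Perm (Fin n)) {μ : YoungDiagram}
    (Q : SYT μ) : ℕ :=
  ((Finset.range (S.card + 2)).filter
    (fun i => (∀ x, sElt n S (S.card + 1 - i) < x → x ≤ n → permApp w x = permApp wS x) ∧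
      (∀ d ∈ Q.des, n - sElt n S (S.card + 1 - i) ≤ d))).max'
    ⟨0, by
      have hs := sElt_of_gt n S (S.card + 1 - 0) (by omega)
      refine Finset.mem_filter.2 ⟨Finset.mem_range.2 (by omega), ?_, ?_⟩
      · intro x hx hx'
        rw [hs] at hx
        exact absurd hx (not_lt.2 hx')
      · intro d _
        rw [hs]
        omega⟩

/-- The condition that all the numbers `1,…,t` appear in the first row of the `r`-colored
standard Young tableau `(Q, c)` and are colored with the zero color (the color of the
entry `k` being `c (k-1)`). -/
def zeroFirstRow {μ : YoungDiagram} {r : ℕ} (Q : SYT μ) (c : Fin μ.card → ZMod r)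
    (t : ℕ) : Prop :=
  ∀ k : Fin μ.card, (k : ℕ) < t →
    ((∃ j, (0, j) ∈ μ ∧ Q.entry 0 j = (k : ℕ) + 1) ∧ c k = 0)

/-- `τ(w,Q)` for an `r`-colored standard Young tableau `(Q,c)`. -/
def ctau (n : ℕ) {r : ℕ} (S : Finset ℕ) (wS w : Equiv.Perm (Fin n)) {μ : YoungDiagram}
    (Q : SYT μ) (c : Fin μ.card → ZMod r) : ℕ :=
  ((Finset.range (S.card + 2)).filter
    (fun i => (∀ x, sElt n S (S.card + 1 - i) < x → x ≤ n → permApp w x = permApp wS x) ∧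
      zeroFirstRow Q c (n - sElt n S (S.card + 1 - i)))).max'
    ⟨0, by
      have hs := sElt_of_gt n S (S.card + 1 - 0) (by omega)
      refine Finset.mem_filter.2 ⟨Finset.mem_range.2 (by omega), ?_, ?_⟩
      · intro x hx hx'
        rw [hs] at hx
        exact absurd hx (not_lt.2 hx')
      · rw [hs]
        intro k hk
        exact absurd hk (by omega)⟩

/-- The largest `i ∈ {0,…,n}` such that all the numbers `1,…,i` appear in the first row
of the `r`-colored standard Young tableau `(Q,c)` and are colored with the zero color. -/
def mQ (n : ℕ) {r : ℕ} {μ : YoungDiagram} (Q : SYT μ) (c : Fin μ.card → ZMod r) : ℕ :=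
  ((Finset.range (n + 1)).filter (fun i => zeroFirstRow Q c i)).max'
    ⟨0, Finset.mem_filter.2 ⟨Finset.mem_range.2 (by omega),
      fun k hk => absurd hk (by omega)⟩⟩

/-- The condition, for an `r`-colored permutation `(π, c)` (the color of the entry
`π(x)` in one-line notation being `c (x-1)`), that the entries `π(1),…,π(t)` are in
increasing order and all colored with the zero color. -/
def zeroIncreasing {n r : ℕ} (π : Equiv.Perm (Fin n)) (c : Fin n → ZMod r) (t : ℕ) : Prop :=
  (∀ x y, 1 ≤ x → x < y → y ≤ t → permApp π x < permApp π y) ∧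
  ∀ k : Fin n, (k : ℕ) < t → c k = 0

/-- `τ(w,u)` for an `r`-colored permutation `u = (π, c)`. -/
def tauU (n : ℕ) {r : ℕ} (S : Finset ℕ) (wS w : Equiv.Perm (Fin n))
    (π : Equiv.Perm (Fin n)) (c : Fin n → ZMod r) : ℕ :=
  ((Finset.range (S.card + 2)).filter
    (fun i => (∀ x, sElt n S (S.card + 1 - i) < x → x ≤ n → permApp w x = permApp wS x) ∧
      zeroIncreasing π c (n - sElt n S (S.card + 1 - i)))).max'
    ⟨0, by
      have hs := sElt_of_gt n S (S.card + 1 - 0) (by omega)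
      refine Finset.mem_filter.2 ⟨Finset.mem_range.2 (by omega), ?_, ?_, ?_⟩
      · intro x hx hx'
        rw [hs] at hx
        exact absurd hx (not_lt.2 hx')
      · intro x y hx hxy hy
        rw [hs] at hy
        exact absurd hy (by omega)
      · rw [hs]
        intro k hk
        exact absurd hk (by omega)⟩

/-- The largest `i ∈ {0,…,n}` such that the entries `π(1),…,π(i)` of the `r`-colored
permutation `(π,c)` are in increasing order and all colored with the zero color. -/
def mU (n : ℕ) {r : ℕ} (π : Equiv.Perm (Fin n)) (c : Fin n → ZMod r) : ℕ :=
  ((Finset.range (n + 1)).filter (fun i => zeroIncreasing π c i)).max'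
    ⟨0, Finset.mem_filter.2 ⟨Finset.mem_range.2 (by omega),
      fun x y hx hxy hy => absurd hy (by omega),
      fun k hk => absurd hk (by omega)⟩⟩

/-- `a_m(T)`: the number of chains in the Boolean lattice `B_m` whose elements have
set of ranks (cardinalities) equal to `T`. -/
def boolChains (m : ℕ) (T : Finset ℕ) : ℕ :=
  Nat.card {c : Finset (Finset (Fin m)) //
    IsChain (· ⊆ ·) (↑c : Set (Finset (Fin m))) ∧ c.image Finset.card = T}

end

/-!
A maximal chain of `P_S` fixed by `g` has the form `0̂ < D < x < 1̂`, where `x` is its element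
of rank `m = max S` and `D` is a chain of `[0̂, x]` with rank set `S ∖ {m}`. Since `g` preserves
ranks, a `g`-stable chain is fixed pointwise, so `x` is fixed; conversely, goodness makes every
element below a fixed `x` fixed, so each such `D` yields a fixed chain. Through
`[0̂, x] ≅ B_m`, where rank is cardinality, there are `a_m(S ∖ {m})` choices of `D` for each
fixed `x` of rank `m`, and these `x` correspond to the fixed maximal chains `0̂ < x < 1̂`
of `P_{m}`.
-/

section Graded

variable {P : Type*} [PartialOrder P] [LocallyFiniteOrder P] {ρ : P → ℕ}

theorem strictMono_of_covBy_add_one (hρ : ∀ a b : P, a ⋖ b → ρ b = ρ a + 1) : StrictMono ρ :=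
  (strictMono_iff_forall_covBy ρ).2 fun a b hab => by rw [hρ a b hab]; exact Nat.lt_add_one _

theorem eq_of_covBy_add_one [OrderBot P] {σ : P → ℕ} (hρ : ∀ a b : P, a ⋖ b → ρ b = ρ a + 1)
    (hσ : ∀ a b : P, a ⋖ b → σ b = σ a + 1) (hbot : ρ ⊥ = σ ⊥) : ρ = σ := by
  funext x
  induction le_iff_reflTransGen_covBy.1 (bot_le : ⊥ ≤ x) with
  | refl => exact hbot
  | tail _ hcov ih => rw [hρ _ _ hcov, hσ _ _ hcov, ih]

theorem exists_rank_eq_of_le (hρ : ∀ a b : P, a ⋖ b → ρ b = ρ a + 1) {a b : P} (hab : a ≤ b)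
    {s : ℕ} (has : ρ a ≤ s) (hsb : s ≤ ρ b) : ∃ z, a ≤ z ∧ z ≤ b ∧ ρ z = s := by
  induction le_iff_reflTransGen_covBy.1 hab generalizing s with
  | refl => exact ⟨a, le_rfl, le_rfl, le_antisymm has hsb⟩
  | @tail c d hac hcd ih =>
    rcases le_or_gt s (ρ c) with hsc | hcs
    · obtain ⟨z, haz, hzc, hz⟩ := ih (le_iff_reflTransGen_covBy.2 hac) has hsc
      exact ⟨z, haz, hzc.trans hcd.le, hz⟩
    · refine ⟨d, (le_iff_reflTransGen_covBy.2 hac).trans hcd.le, le_rfl, ?_⟩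
      rw [hρ c d hcd] at hsb ⊢
      omega

end Graded

section Chain

variable {P β : Type*} [PartialOrder P] [LinearOrder β] {ρ : P → β} {C : Set P} {y z : P}

theorem IsChain.le_iff_of_strictMono (hC : IsChain (· ≤ ·) C) (hρ : StrictMono ρ)
    (hy : y ∈ C) (hz : z ∈ C) : y ≤ z ↔ ρ y ≤ ρ z := by
  refine ⟨fun h => hρ.monotone h, fun h => ?_⟩
  rcases eq_or_ne y z with rfl | hne
  · exact le_rfl
  · exact (hC hy hz hne).resolve_right fun hzy => (hρ (lt_of_le_of_ne hzy hne.symm)).not_ge h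

theorem IsChain.injOn_of_strictMono (hC : IsChain (· ≤ ·) C) (hρ : StrictMono ρ) :
    Set.InjOn ρ C := fun _ hy _ hz h =>
  le_antisymm ((hC.le_iff_of_strictMono hρ hy hz).2 h.le)
    ((hC.le_iff_of_strictMono hρ hz hy).2 h.ge)

end Chain

section RankSelection

variable {P : Type*} [PartialOrder P] [BoundedOrder P] [LocallyFiniteOrder P] {ρ : P → ℕ}
  {C : Set P} {S : Finset ℕ}

theorem IsChain.exists_isChain_insert_rank_eq (hρ : ∀ a b : P, a ⋖ b → ρ b = ρ a + 1)
    (hC : IsChain (· ≤ ·) C) (hbot : ⊥ ∈ C) (htop : ⊤ ∈ C) {s : ℕ} (hs : ρ ⊥ ≤ s ∧ s ≤ ρ ⊤) :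
    ∃ z, ρ z = s ∧ IsChain (· ≤ ·) (insert z C) := by
  by_cases hmem : ∃ z ∈ C, ρ z = s
  · obtain ⟨z, hz, rfl⟩ := hmem
    exact ⟨z, rfl, by rwa [Set.insert_eq_of_mem hz]⟩
  push Not at hmem
  have hmono := strictMono_of_covBy_add_one hρ
  have hfin : C.Finite := (Set.finite_Icc ⊥ ⊤).subset fun y _ => ⟨bot_le, le_top⟩
  -- `z` is squeezed between the highest element of `C` below rank `s` and the lowest above it
  obtain ⟨a, ⟨haC, has⟩, hamax⟩ := (hfin.subset (Set.sep_subset C (ρ · < s))).exists_maximalFor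
    ρ _ ⟨⊥, hbot, lt_of_le_of_ne hs.1 (hmem ⊥ hbot)⟩
  obtain ⟨b, ⟨hbC, hsb⟩, hbmin⟩ := (hfin.subset (Set.sep_subset C (s < ρ ·))).exists_minimalFor
    ρ _ ⟨⊤, htop, lt_of_le_of_ne hs.2 (hmem ⊤ htop).symm⟩
  have hab : a ≤ b := (hC.le_iff_of_strictMono hmono haC hbC).2 (by omega)
  obtain ⟨z, haz, hzb, rfl⟩ := exists_rank_eq_of_le hρ hab has.le hsb.le
  refine ⟨z, rfl, hC.insert fun y hy _ => ?_⟩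
  rcases lt_or_gt_of_ne (hmem y hy) with hyz | hzy
  · have hya : ρ y ≤ ρ a := Nat.le_of_not_lt fun h : ρ a < ρ y => (hamax ⟨hy, hyz⟩ h.le).not_gt h
    exact Or.inr (((hC.le_iff_of_strictMono hmono hy haC).2 hya).trans haz)
  · have hby : ρ b ≤ ρ y := Nat.le_of_not_lt fun h : ρ y < ρ b => (hbmin ⟨hy, hzy⟩ h.le).not_gt h
    exact Or.inl (hzb.trans ((hC.le_iff_of_strictMono hmono hbC hy).2 hby))

theorem mem_maxChainsIn_rankSel_iff (hρ : ∀ a b : P, a ⋖ b → ρ b = ρ a + 1)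
    (hS : ∀ s ∈ S, ρ ⊥ ≤ s ∧ s ≤ ρ ⊤) :
    C ∈ maxChainsIn (rankSel ρ S) ↔
      C ⊆ rankSel ρ S ∧ IsChain (· ≤ ·) C ∧ ⊥ ∈ C ∧ ⊤ ∈ C ∧ ∀ s ∈ S, ∃ y ∈ C, ρ y = s := by
  constructor
  · rintro ⟨hsub, hC, hmax⟩
    have hins : ∀ z ∈ rankSel ρ S, IsChain (· ≤ ·) (insert z C) → z ∈ C := fun z hz hzC =>
      (hmax _ (Set.insert_subset hz hsub) hzC (Set.subset_insert z C)) ▸ Set.mem_insert z C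
    have hbot : ⊥ ∈ C :=
      hins ⊥ (Or.inr (Set.mem_insert _ _)) (hC.insert fun _ _ _ => Or.inl bot_le)
    have htop : ⊤ ∈ C :=
      hins ⊤ (Or.inr (Set.mem_insert_of_mem _ rfl)) (hC.insert fun _ _ _ => Or.inr le_top)
    refine ⟨hsub, hC, hbot, htop, fun s hs => ?_⟩
    obtain ⟨z, rfl, hzC⟩ := hC.exists_isChain_insert_rank_eq hρ hbot htop (hS s hs)
    exact ⟨z, hins z (Or.inl hs) hzC, rfl⟩
  · rintro ⟨hsub, hC, hbot, htop, hrank⟩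
    refine ⟨hsub, hC, fun D hD hDC hCD => hCD.antisymm fun d hd => ?_⟩
    rcases hD hd with hdS | rfl | rfl
    · obtain ⟨y, hy, hyd⟩ := hrank _ hdS
      rwa [← hDC.injOn_of_strictMono (strictMono_of_covBy_add_one hρ) (hCD hy) hd hyd]
    · exact hbot
    · exact htop

end RankSelection

section Action

variable {P G : Type*} [PartialOrder P] [Group G] [MulAction G P]

def smulOrderIso (hact : ∀ (g : G) (x y : P), x ≤ y ↔ g • x ≤ g • y) (g : G) : P ≃o P :=
  { MulAction.toPerm g with map_rel_iff' := (hact g _ _).symm }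

variable (hact : ∀ (g : G) (x y : P), x ≤ y ↔ g • x ≤ g • y) (g : G)
include hact

theorem smul_bot_of_le_iff [OrderBot P] : g • (⊥ : P) = ⊥ := (smulOrderIso hact g).map_bot

theorem smul_top_of_le_iff [OrderTop P] : g • (⊤ : P) = ⊤ := (smulOrderIso hact g).map_top

theorem rank_smul_of_le_iff [OrderBot P] [LocallyFiniteOrder P] {ρ : P → ℕ}
    (hρ : ∀ a b : P, a ⋖ b → ρ b = ρ a + 1) (x : P) : ρ (g • x) = ρ x := by
  refine congrFun (eq_of_covBy_add_one (ρ := fun x => ρ (g • x)) (fun a b hab => ?_) hρ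
    (by rw [smul_bot_of_le_iff hact])) x
  exact hρ _ _ ((apply_covBy_apply_iff (smulOrderIso hact g)).2 hab)

theorem IsChain.smul_eq_self_of_image_eq [OrderBot P] [LocallyFiniteOrder P] {ρ : P → ℕ}
    (hρ : ∀ a b : P, a ⋖ b → ρ b = ρ a + 1) {C : Set P} (hC : IsChain (· ≤ ·) C)
    (hfix : (fun x => g • x) '' C = C) {y : P} (hy : y ∈ C) : g • y = y :=
  hC.injOn_of_strictMono (strictMono_of_covBy_add_one hρ) (hfix ▸ Set.mem_image_of_mem _ hy) hy
    (rank_smul_of_le_iff hact g hρ y)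

end Action

section Simplicial

variable {P : Type*} [PartialOrder P] {ρ : P → ℕ}

def rankChainsBelow (ρ : P → ℕ) (x : P) (T : Finset ℕ) : Set (Set P) :=
  {D | IsChain (· ≤ ·) D ∧ D ⊆ Set.Iic x ∧ ρ '' D = T}

theorem rank_mem_of_mem_rankChainsBelow {x : P} {T : Finset ℕ} {D : Set P}
    (hD : D ∈ rankChainsBelow ρ x T) {y : P} (hy : y ∈ D) : ρ y ∈ T := by
  have : ρ y ∈ ρ '' D := Set.mem_image_of_mem ρ hy
  rwa [hD.2.2, Finset.mem_coe] at this

theorem exists_orderEmbedding_rank_eq_card [OrderBot P] [LocallyFiniteOrder P]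
    (hρ : ∀ a b : P, a ⋖ b → ρ b = ρ a + 1) (hρbot : ρ ⊥ = 0) {x : P} {m k : ℕ} (hx : ρ x = m)
    (e : Set.Iic x ≃o Finset (Fin k)) :
    ∃ f : Finset (Fin m) ↪o P, Set.range f = Set.Iic x ∧ ∀ A, ρ (f A) = A.card := by
  set f : Finset (Fin k) ↪o P := e.symm.toOrderEmbedding.trans (OrderEmbedding.subtype _)
  have hrange : Set.range f = Set.Iic x := by
    simp only [f, RelEmbedding.coe_trans, Set.range_comp, OrderIso.coe_toOrderEmbedding,
      e.symm.surjective.range_eq, Set.image_univ, OrderEmbedding.coe_subtype, Subtype.range_coe]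
  have hbot : f ∅ = ⊥ := congrArg Subtype.val e.symm.map_bot
  have htop : f Finset.univ = x := congrArg Subtype.val e.symm.map_top
  have hcard : ∀ A, ρ (f A) = A.card := congrFun <| eq_of_covBy_add_one
    (fun a b hab => hρ _ _ ((Set.OrdConnected.apply_covBy_apply_iff f
      (hrange ▸ Set.ordConnected_Iic)).2 hab))
    (fun a b hab => (Nat.covBy_iff_add_one_eq.1 hab.card_finset).symm)
    (by simp only [Finset.bot_eq_empty, hbot, hρbot, Finset.card_empty])
  obtain rfl : k = m := by simpa [htop, hx] using (hcard Finset.univ).symm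
  exact ⟨f, hrange, hcard⟩

theorem ncard_rankChainsBelow {x : P} {m : ℕ} (f : Finset (Fin m) ↪o P)
    (hf : Set.range f = Set.Iic x) (hρf : ∀ A, ρ (f A) = A.card) (T : Finset ℕ) :
    (rankChainsBelow ρ x T).ncard = boolChains m T := by
  have himage : rankChainsBelow ρ x T = (fun c : Finset (Finset (Fin m)) => f '' c) ''
      {c | IsChain (· ⊆ ·) (c : Set (Finset (Fin m))) ∧ c.image Finset.card = T} := by
    have hρimage (s : Set (Finset (Fin m))) : ρ '' (f '' s) = Finset.card '' s := by
      simp only [Set.image_image, hρf]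
    ext D
    constructor
    · rintro ⟨hD, hDx, hρD⟩
      set c := Finset.univ.filter fun A => f A ∈ D
      have hfc : f '' c = D := by
        ext y
        refine ⟨fun ⟨A, hA, hAy⟩ => hAy ▸ (Finset.mem_filter.1 hA).2, fun hy => ?_⟩
        obtain ⟨A, rfl⟩ : y ∈ Set.range f := hf ▸ hDx hy
        exact ⟨A, by simpa [c] using hy, rfl⟩
      refine ⟨c, ⟨IsChain.image_relEmbedding_iff.1 (hfc ▸ hD), ?_⟩, hfc⟩
      rw [← Finset.coe_inj, Finset.coe_image, ← hρimage, hfc, hρD]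
    · rintro ⟨c, ⟨hc, hcT⟩, rfl⟩
      refine ⟨IsChain.image_relEmbedding_iff.2 hc, hf ▸ Set.image_subset_range _ _, ?_⟩
      rw [hρimage, ← hcT, Finset.coe_image]
  rw [himage, Set.ncard_image_of_injective _ fun c₁ c₂ h =>
    Finset.coe_injective (Set.image_injective.2 f.injective h), ← Nat.card_coe_set_eq]
  rfl

end Simplicial

section Decomposition

variable {P : Type*} [PartialOrder P] [BoundedOrder P] {ρ : P → ℕ} {S : Finset ℕ} {m : ℕ}
  {x : P} {D : Set P}

def completeChain (x : P) (D : Set P) : Set P := insert ⊥ (insert ⊤ (insert x D))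

theorem eq_of_mem_completeChain_of_rank_eq (hS : ∀ s ∈ S, ρ ⊥ < s ∧ s < ρ ⊤) (hm : m ∈ S)
    (hD : D ∈ rankChainsBelow ρ x (S.erase m)) {y : P} (hy : y ∈ completeChain x D)
    (hym : ρ y = m) : y = x := by
  rcases hy with rfl | rfl | rfl | hy
  · exact absurd hym (hS m hm).1.ne
  · exact absurd hym (hS m hm).2.ne'
  · rfl
  · exact absurd hym (Finset.ne_of_mem_erase (rank_mem_of_mem_rankChainsBelow hD hy))

theorem sep_completeChain_eq (hS : ∀ s ∈ S, ρ ⊥ < s ∧ s < ρ ⊤) (hx : ρ x = m)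
    (hD : D ∈ rankChainsBelow ρ x (S.erase m)) :
    {y ∈ completeChain x D | ρ y ∈ S.erase m} = D := by
  ext y
  refine ⟨fun ⟨hy, hyT⟩ => ?_,
    fun hy => ⟨.inr (.inr (.inr hy)), rank_mem_of_mem_rankChainsBelow hD hy⟩⟩
  have hyS := hS _ (Finset.mem_of_mem_erase hyT)
  rcases hy with rfl | rfl | rfl | hy
  · exact absurd hyS.1 (lt_irrefl _)
  · exact absurd hyS.2 (lt_irrefl _)
  · exact absurd hx (Finset.ne_of_mem_erase hyT)
  · exact hy

theorem image_smul_completeChain {G : Type*} [Group G] [MulAction G P]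
    (hact : ∀ (g : G) (x y : P), x ≤ y ↔ g • x ≤ g • y)
    (hgood : ∀ (g : G) (y : P), y ≠ ⊤ → g • y = y → ∀ x : P, x ≤ y → g • x = x) {g : G}
    (hxtop : x ≠ ⊤) (hgx : g • x = x) (hDx : D ⊆ Set.Iic x) :
    (fun y => g • y) '' completeChain x D = completeChain x D := by
  refine (Set.image_congr fun y hy => ?_).trans (Set.image_id' _)
  rcases hy with rfl | rfl | rfl | hy
  exacts [smul_bot_of_le_iff hact g, smul_top_of_le_iff hact g, hgx, hgood g x hxtop hgx y (hDx hy)]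

variable [LocallyFiniteOrder P] (hρ : ∀ a b : P, a ⋖ b → ρ b = ρ a + 1)
  (hS : ∀ s ∈ S, ρ ⊥ < s ∧ s < ρ ⊤)
include hρ hS

theorem completeChain_mem_maxChainsIn (hm : m ∈ S) (hx : ρ x = m)
    (hD : D ∈ rankChainsBelow ρ x (S.erase m)) :
    completeChain x D ∈ maxChainsIn (rankSel ρ S) := by
  refine (mem_maxChainsIn_rankSel_iff hρ fun s hs => ⟨(hS s hs).1.le, (hS s hs).2.le⟩).2
    ⟨?_, ?_, .inl rfl, .inr (.inl rfl), fun s hs => ?_⟩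
  · rintro y (rfl | rfl | rfl | hy)
    · exact .inr (.inl rfl)
    · exact .inr (.inr rfl)
    · exact .inl (show ρ y ∈ S by rwa [hx])
    · exact .inl (Finset.mem_of_mem_erase (rank_mem_of_mem_rankChainsBelow hD hy))
  · exact ((hD.1.insert fun y hy _ => .inr (hD.2.1 hy)).insert fun _ _ _ => .inr le_top).insert
      fun _ _ _ => .inl bot_le
  · rcases eq_or_ne s m with rfl | hsm
    · exact ⟨x, .inr (.inr (.inl rfl)), hx⟩
    · have hs' : s ∈ ρ '' D := by rw [hD.2.2]; exact Finset.mem_erase.2 ⟨hsm, hs⟩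
      obtain ⟨y, hy, rfl⟩ := hs'
      exact ⟨y, .inr (.inr (.inr hy)), rfl⟩

theorem exists_completeChain_eq {C : Set P} (hm : m ∈ S) (hmax : ∀ s ∈ S, s ≤ m)
    (hC : C ∈ maxChainsIn (rankSel ρ S)) :
    ∃ x ∈ C, ρ x = m ∧ {y ∈ C | ρ y ∈ S.erase m} ∈ rankChainsBelow ρ x (S.erase m) ∧
      completeChain x {y ∈ C | ρ y ∈ S.erase m} = C := by
  obtain ⟨hsub, hch, hbot, htop, hrank⟩ :=
    (mem_maxChainsIn_rankSel_iff hρ fun s hs => ⟨(hS s hs).1.le, (hS s hs).2.le⟩).1 hC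
  have hmono := strictMono_of_covBy_add_one hρ
  obtain ⟨x, hxC, hx⟩ := hrank m hm
  refine ⟨x, hxC, hx, ⟨hch.mono (Set.sep_subset _ _), fun y hy => ?_, ?_⟩, ?_⟩
  · exact (hch.le_iff_of_strictMono hmono hy.1 hxC).2
      (hx ▸ hmax _ (Finset.mem_of_mem_erase hy.2))
  · ext t
    refine ⟨fun ⟨y, hy, hyt⟩ => hyt ▸ hy.2, fun ht => ?_⟩
    obtain ⟨y, hy, rfl⟩ := hrank t (Finset.mem_of_mem_erase ht)
    exact ⟨y, ⟨hy, ht⟩, rfl⟩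
  · refine (Set.insert_subset hbot (Set.insert_subset htop
      (Set.insert_subset hxC (Set.sep_subset _ _)))).antisymm fun y hy => ?_
    rcases hsub hy with hyS | rfl | rfl
    · rcases eq_or_ne (ρ y) m with hym | hym
      · exact .inr (.inr (.inl (hch.injOn_of_strictMono hmono hy hxC (hym.trans hx.symm))))
      · exact .inr (.inr (.inr ⟨hy, Finset.mem_erase.2 ⟨hym, hyS⟩⟩))
    · exact .inl rfl
    · exact .inr (.inl rfl)

end Decomposition

theorem ncard_fixed_maxChainsIn_rankSel {P G : Type*} [Fintype P] [PartialOrder P]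
    [BoundedOrder P] [LocallyFiniteOrder P] [Group G] [MulAction G P]
    (hact : ∀ (g : G) (x y : P), x ≤ y ↔ g • x ≤ g • y)
    (hgood : ∀ (g : G) (y : P), y ≠ ⊤ → g • y = y → ∀ x : P, x ≤ y → g • x = x)
    {ρ : P → ℕ} (hρ : ∀ a b : P, a ⋖ b → ρ b = ρ a + 1) {S : Finset ℕ} {m : ℕ}
    (hS : ∀ s ∈ S, ρ ⊥ < s ∧ s < ρ ⊤) (hm : m ∈ S) (hmax : ∀ s ∈ S, s ≤ m) (g : G) :
    {C | C ∈ maxChainsIn (rankSel ρ S) ∧ (fun x => g • x) '' C = C}.ncard =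
      ∑ x : {x : P // ρ x = m ∧ g • x = x}, (rankChainsBelow ρ x.1 (S.erase m)).ncard := by
  have hne_top {x : P} (hx : ρ x = m) : x ≠ ⊤ := fun h => (hS m hm).2.ne (by rw [← hx, h])
  let Φ : (Σ x : {x : P // ρ x = m ∧ g • x = x}, rankChainsBelow ρ x.1 (S.erase m)) →
      {C | C ∈ maxChainsIn (rankSel ρ S) ∧ (fun x => g • x) '' C = C} := fun p =>
    ⟨completeChain p.1.1 p.2.1, completeChain_mem_maxChainsIn hρ hS hm p.1.2.1 p.2.2,
      image_smul_completeChain hact hgood (hne_top p.1.2.1) p.1.2.2 p.2.2.2.1⟩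
  have hΦ : Function.Bijective Φ := by
    constructor
    · rintro ⟨⟨x, hx, _⟩, D, hD⟩ ⟨⟨x', hx', _⟩, D', hD'⟩ hΦeq
      have h : completeChain x D = completeChain x' D' := congrArg Subtype.val hΦeq
      obtain rfl : x = x' := eq_of_mem_completeChain_of_rank_eq hS hm hD'
        (h ▸ .inr (.inr (.inl rfl))) hx
      obtain rfl : D = D' := by
        rw [← sep_completeChain_eq hS hx hD, h, sep_completeChain_eq hS hx hD']
      rfl
    · rintro ⟨C, hC, hfix⟩
      obtain ⟨x, hxC, hx, hD, hCeq⟩ := exists_completeChain_eq hρ hS hm hmax hC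
      exact ⟨⟨⟨x, hx, hC.2.1.smul_eq_self_of_image_eq hact g hρ hfix hxC⟩, _, hD⟩,
        Subtype.ext hCeq⟩
  rw [← Nat.card_coe_set_eq, ← Nat.card_congr (Equiv.ofBijective Φ hΦ), Nat.card_sigma]
  simp only [Nat.card_coe_set_eq]

/-- **Eq. (9)**: for a good action of a group `G` on a finite graded poset `P` of rank
`n+1` such that `P ∖ {⊤}` is simplicial, for every nonempty `S ⊆ {1,…,n}` with maximum
element `m`, `α_P(S) = a_m(S ∖ {m}) · α_P({m})`. -/
theorem statement5 {P : Type*} [Fintype P] [PartialOrder P] [BoundedOrder P]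
    {G : Type*} [Group G] [MulAction G P]
    (hact : ∀ (g : G) (x y : P), x ≤ y ↔ g • x ≤ g • y)
    (hgood : ∀ (g : G) (y : P), y ≠ ⊤ → g • y = y → ∀ x : P, x ≤ y → g • x = x)
    (n : ℕ) (ρ : P → ℕ) (hρbot : ρ ⊥ = 0) (hρtop : ρ ⊤ = n + 1)
    (hρcov : ∀ a b : P, a ⋖ b → ρ b = ρ a + 1)
    (hsimp : ∀ x : P, x ≠ ⊤ → ∃ m : ℕ, Nonempty (Set.Iic x ≃o Finset (Fin m)))
    (S : Finset ℕ) (hS : S ⊆ Finset.Icc 1 n) (hSne : S.Nonempty) :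
    ∀ g : G, gAlpha ρ (fun g x => g • x) S g =
      (boolChains (S.max' hSne) (S.erase (S.max' hSne)) : ℤ) *
        gAlpha ρ (fun g x => g • x) {S.max' hSne} g := by
  intro g
  let : LocallyFiniteOrder P := Fintype.toLocallyFiniteOrder
  set m := S.max' hSne
  have hrange : ∀ s ∈ S, ρ ⊥ < s ∧ s < ρ ⊤ := fun s hs => by
    have := Finset.mem_Icc.1 (hS hs); omega
  have hm : m ∈ S := S.max'_mem hSne
  have hcount (x : {x : P // ρ x = m ∧ g • x = x}) :
      (rankChainsBelow ρ x.1 (S.erase m)).ncard = boolChains m (S.erase m) := by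
    obtain ⟨x, hx, -⟩ := x
    obtain ⟨k, ⟨e⟩⟩ := hsimp x fun h => (hrange _ hm).2.ne (by rw [← hx, h])
    obtain ⟨f, hf, hρf⟩ := exists_orderEmbedding_rank_eq_card hρcov hρbot hx e
    exact ncard_rankChainsBelow f hf hρf _
  have hbelow_empty (x : P) : rankChainsBelow ρ x ∅ = {∅} := by
    ext D
    simp only [rankChainsBelow, Finset.coe_empty, Set.image_eq_empty, Set.mem_ofPred_eq,
      Set.mem_singleton_iff]
    exact ⟨fun h => h.2.2, by rintro rfl; exact ⟨IsChain.empty, Set.empty_subset _, rfl⟩⟩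
  unfold gAlpha
  rw [ncard_fixed_maxChainsIn_rankSel hact hgood hρcov hrange hm (fun s hs => S.le_max' s hs) g,
    ncard_fixed_maxChainsIn_rankSel hact hgood hρcov (fun s hs => hrange s
      (Finset.mem_singleton.1 hs ▸ hm)) (Finset.mem_singleton_self m)
      (fun s hs => (Finset.mem_singleton.1 hs).le) g]
  simp [hcount, hbelow_empty, mul_comm]
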